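/- Fix x ∈ E, ν₀ ∈ (E →L[ℝ] ℝ), define ν t := ν₀ ∘ D(f (−t))(f t x), and let X : E → E be a C¹ vector field. Then the function η(t) := ν t ( X (f t x) ) is differentiable with η'(t) = ν t ( DX(f t x)(F (f t x)) − DF(f t x)(X (f t x)) ) for all t ∈ ℝ; that is, the derivative along the orbit of the pairing of the adjoint covector with X equals its pairing with the Lie derivative L_F X = ∇_F X − ∇_X F. -/

import Mathlib

/-!
The derivative of `h ↦ D(f h)(p)` at `0` is `DF(p)`. No joint regularity of `(t, z) ↦ f t z` is
assumed, so this is proved by hand: strict differentiability of `F` at `p` makes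
`F a - F b - DF(p) (a - b)` small relative to `a - b` near `p`; trajectories starting near `p` stay
near `p` for a uniform time and, by Gronwall, separate at most exponentially; integrating the ODE
then shows that `z ↦ f h z - z - h • DF(p) z` is `o(h)`-Lipschitz at `p`, which bounds its
derivative. Negative times follow from the reversed flow of `-F`.

With `p = f t x`, the group law gives `η (t + h) = ν t ((D(f h)(p))⁻¹ (X (f h p)))`;
differentiating the inverse at `h = 0` contributes `-DF(p)`, and `X` along the orbit `DX(p) (F p)`.
-/

open Set Filter Topology Metric

theorem flow_neg_apply_flow {α : Type*} {f : ℝ → α → α} (hf0 : ∀ z, f 0 z = z)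
    (hfadd : ∀ s t z, f (s + t) z = f s (f t z)) (t : ℝ) (z : α) : f (-t) (f t z) = z := by
  rw [← hfadd, neg_add_cancel, hf0]

section Flow

variable {E : Type*} [NormedAddCommGroup E] [NormedSpace ℝ E]

structure IsIntegralCurveFamily (F : E → E) (f : ℝ → E → E) : Prop where
  map_zero : ∀ z, f 0 z = z
  hasDerivAt : ∀ t z, HasDerivAt (fun τ => f τ z) (F (f t z)) t

theorem lipschitzOnWith_of_norm_sub_sub_le {F : E → E} {A : E →L[ℝ] E} {s : Set E} {ε : ℝ}
    (hε : ε ≤ 1) (hFA : ∀ a ∈ s, ∀ b ∈ s, ‖F a - F b - A (a - b)‖ ≤ ε * ‖a - b‖) :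
    LipschitzOnWith (‖A‖₊ + 1) F s := by
  refine LipschitzOnWith.of_dist_le_mul fun a ha b hb => ?_
  rw [dist_eq_norm, dist_eq_norm]
  calc ‖F a - F b‖ ≤ ‖A (a - b)‖ + ‖F a - F b - A (a - b)‖ := norm_le_insert' _ _
    _ ≤ ‖A‖ * ‖a - b‖ + 1 * ‖a - b‖ :=
      add_le_add (A.le_opNorm _) ((hFA a ha b hb).trans (by gcongr))
    _ = _ := by push_cast; ring

namespace IsIntegralCurveFamily

variable {F : E → E} {f : ℝ → E → E}

theorem neg (hf : IsIntegralCurveFamily F f) :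
    IsIntegralCurveFamily (fun y => -F y) (fun t => f (-t)) where
  map_zero z := by simpa using hf.map_zero z
  hasDerivAt t z := by
    simpa [Function.comp_def] using (hf.hasDerivAt (-t) z).scomp t (hasDerivAt_neg t)

theorem fderiv_zero (hf : IsIntegralCurveFamily F f) (p : E) :
    fderiv ℝ (f 0) p = ContinuousLinearMap.id ℝ E := by
  rw [show f 0 = id from funext hf.map_zero, fderiv_id]

theorem norm_sub_sub_sub_smul_le (hf : IsIntegralCurveFamily F f) {z w v : E} {C h : ℝ}
    (hh : 0 ≤ h) (hC : ∀ s ∈ Icc 0 h, ‖F (f s z) - F (f s w) - v‖ ≤ C) :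
    ‖f h z - f h w - (z - w) - h • v‖ ≤ C * h := by
  have hderiv : ∀ s ∈ Icc 0 h, HasDerivWithinAt (fun τ => f τ z - f τ w - τ • v)
      (F (f s z) - F (f s w) - v) (Icc 0 h) s := fun s _ =>
    (((hf.hasDerivAt s z).sub (hf.hasDerivAt s w)).sub
      (by simpa using (hasDerivAt_id s).smul_const v)).hasDerivWithinAt
  have := (convex_Icc 0 h).norm_image_sub_le_of_norm_hasDerivWithin_le hderiv hC
    (left_mem_Icc.2 hh) (right_mem_Icc.2 hh)
  rw [sub_right_comm]
  simpa [hf.map_zero, Real.norm_of_nonneg hh] using this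

theorem norm_sub_le_mul (hf : IsIntegralCurveFamily F f) {z : E} {M R T : ℝ} (hM0 : 0 ≤ M)
    (hM : ∀ y ∈ closedBall z R, ‖F y‖ < M) (hT : M * T ≤ R) :
    ∀ s ∈ Icc 0 T, ‖f s z - z‖ ≤ M * s := by
  have hd : ∀ s, HasDerivAt (fun τ => f τ z - z) (F (f s z)) s :=
    fun s => (hf.hasDerivAt s z).sub_const z
  refine image_norm_le_of_norm_deriv_right_lt_deriv_boundary'
    (fun s _ => (hd s).continuousAt.continuousWithinAt) (fun s _ => (hd s).hasDerivWithinAt)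
    (by simp [hf.map_zero]) (continuous_const.mul continuous_id).continuousOn
    (fun s _ => by simpa using ((hasDerivAt_id s).const_mul M).hasDerivWithinAt) ?_
  intro s hs hbd
  refine hM _ ?_
  rw [mem_closedBall, dist_eq_norm, hbd]
  exact (mul_le_mul_of_nonneg_left hs.2.le hM0).trans hT

theorem dist_le_mul_exp (hf : IsIntegralCurveFamily F f) {K : NNReal} {s : Set E}
    (hK : LipschitzOnWith K F s) {z w : E} {T : ℝ} (hz : ∀ t ∈ Icc 0 T, f t z ∈ s)
    (hw : ∀ t ∈ Icc 0 T, f t w ∈ s) :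
    ∀ t ∈ Icc 0 T, dist (f t z) (f t w) ≤ dist z w * Real.exp (K * t) := by
  have := dist_le_of_trajectories_ODE_of_mem (v := fun _ => F) (s := fun _ => s) (fun _ _ => hK)
    (fun t _ => (hf.hasDerivAt t z).continuousAt.continuousWithinAt)
    (fun t _ => (hf.hasDerivAt t z).hasDerivWithinAt) (fun t ht => hz t (Ico_subset_Icc_self ht))
    (fun t _ => (hf.hasDerivAt t w).continuousAt.continuousWithinAt)
    (fun t _ => (hf.hasDerivAt t w).hasDerivWithinAt) (fun t ht => hw t (Ico_subset_Icc_self ht))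
    (by rw [hf.map_zero, hf.map_zero])
  simpa using this

theorem norm_sub_sub_sub_smul_apply_le (hf : IsIntegralCurveFamily F f) {A : E →L[ℝ] E}
    {K : NNReal} {s : Set E} {ε T : ℝ} (hK : LipschitzOnWith K F s) (hε : 0 ≤ ε)
    (hFA : ∀ a ∈ s, ∀ b ∈ s, ‖F a - F b - A (a - b)‖ ≤ ε * ‖a - b‖) (hT : T ≤ 1) {z w : E}
    (hz : ∀ t ∈ Icc 0 T, f t z ∈ s) (hw : ∀ t ∈ Icc 0 T, f t w ∈ s) :
    ∀ h ∈ Icc 0 T, ‖f h z - f h w - (z - w) - h • A (z - w)‖ ≤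
      (ε + ‖A‖ * K * h) * Real.exp K * ‖z - w‖ * h := by
  set L := Real.exp K
  have hgron : ∀ t ∈ Icc 0 T, ‖f t z - f t w‖ ≤ L * ‖z - w‖ := by
    intro t ht
    have := hf.dist_le_mul_exp hK hz hw t ht
    rw [dist_eq_norm, dist_eq_norm] at this
    refine this.trans ?_
    rw [mul_comm]
    exact mul_le_mul_of_nonneg_right
      (Real.exp_le_exp.2 (by nlinarith [K.coe_nonneg, ht.1, ht.2])) (norm_nonneg _)
  have hdev : ∀ t ∈ Icc 0 T, ‖f t z - f t w - (z - w)‖ ≤ K * (L * ‖z - w‖) * t := by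
    intro t ht
    simpa using hf.norm_sub_sub_sub_smul_le (v := 0) ht.1 fun σ hσ => by
      have hσ' : σ ∈ Icc 0 T := ⟨hσ.1, hσ.2.trans ht.2⟩
      simpa using (hK.norm_sub_le (hz σ hσ') (hw σ hσ')).trans
        (mul_le_mul_of_nonneg_left (hgron σ hσ') K.coe_nonneg)
  intro h hh
  refine (hf.norm_sub_sub_sub_smul_le (C := (ε + ‖A‖ * K * h) * L * ‖z - w‖) hh.1
    fun σ hσ => ?_).trans_eq (by ring)
  have hσ' : σ ∈ Icc 0 T := ⟨hσ.1, hσ.2.trans hh.2⟩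
  set a := f σ z
  set b := f σ w
  calc ‖F a - F b - A (z - w)‖ = ‖(F a - F b - A (a - b)) + A (a - b - (z - w))‖ := by
        rw [map_sub A (a - b)]; abel_nf
    _ ≤ ε * ‖a - b‖ + ‖A‖ * ‖a - b - (z - w)‖ :=
        norm_add_le_of_le (hFA a (hz σ hσ') b (hw σ hσ')) (A.le_opNorm _)
    _ ≤ ε * (L * ‖z - w‖) + ‖A‖ * (K * (L * ‖z - w‖) * h) := by
        gcongr
        · exact hgron σ hσ'
        · exact (hdev σ hσ').trans (by gcongr; exact hσ.2)
    _ = (ε + ‖A‖ * K * h) * L * ‖z - w‖ := by ring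

theorem exists_pos_forall_apply_mem_closedBall (hf : IsIntegralCurveFamily F f) {p : E}
    {r M : ℝ} (hr : 0 < r) (hM : ∀ y ∈ closedBall p r, ‖F y‖ ≤ M) :
    ∃ T > 0, T ≤ 1 ∧ ∀ z ∈ closedBall p (r / 2), ∀ s ∈ Icc 0 T, f s z ∈ closedBall p r := by
  have hM0 : 0 ≤ M := (norm_nonneg _).trans (hM p (mem_closedBall_self hr.le))
  set T := min 1 (r / 2 / (M + 1))
  have hT : (M + 1) * T ≤ r / 2 := by
    calc (M + 1) * T ≤ (M + 1) * (r / 2 / (M + 1)) := by gcongr; exact min_le_right _ _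
      _ = r / 2 := by field_simp
  refine ⟨T, by positivity, min_le_left _ _, fun z hz s hs => ?_⟩
  have hball : closedBall z (r / 2) ⊆ closedBall p r :=
    closedBall_subset_closedBall' (by linarith [mem_closedBall.1 hz])
  have hesc := hf.norm_sub_le_mul (z := z) (by positivity)
    (fun y hy => (hM y (hball hy)).trans_lt (lt_add_one M)) hT s hs
  rw [mem_closedBall, dist_eq_norm] at hz ⊢
  calc ‖f s z - p‖ ≤ ‖f s z - z‖ + ‖z - p‖ := norm_sub_le_norm_sub_add_norm_sub _ _ _
    _ ≤ r / 2 + r / 2 := add_le_add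
        (hesc.trans ((mul_le_mul_of_nonneg_left hs.2 (by positivity)).trans hT)) hz
    _ = r := by ring

variable {p : E} {A : E →L[ℝ] E}

theorem eventually_norm_fderiv_sub_le (hf : IsIntegralCurveFamily F f)
    (hF : HasStrictFDerivAt F A p) (hdiff : ∀ t, DifferentiableAt ℝ (f t) p) {ε : ℝ}
    (hε0 : 0 < ε) (hε : ε ≤ 1) :
    ∀ᶠ h in 𝓝[≥] 0, ‖fderiv ℝ (f h) p - ContinuousLinearMap.id ℝ E - h • A‖ ≤
      (ε + ‖A‖ * (‖A‖ + 1) * h) * Real.exp (‖A‖ + 1) * h := by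
  obtain ⟨r, hr, hFA⟩ : ∃ r > 0, ∀ a ∈ closedBall p r, ∀ b ∈ closedBall p r,
      ‖F a - F b - A (a - b)‖ ≤ ε * ‖a - b‖ := by
    obtain ⟨r, hr, hball⟩ := nhds_basis_closedBall.eventually_iff.1 (hF.isLittleO.def hε0)
    exact ⟨r, hr, fun a ha b hb =>
      hball (x := (a, b)) (by rw [← closedBall_prod_same]; exact ⟨ha, hb⟩)⟩
  have hK := lipschitzOnWith_of_norm_sub_sub_le hε hFA
  have hM : ∀ y ∈ closedBall p r, ‖F y‖ ≤ ‖F p‖ + (‖A‖₊ + 1 : NNReal) * r := fun y hy =>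
    (norm_le_insert' _ _).trans (add_le_add_right
      ((hK.norm_sub_le hy (mem_closedBall_self hr.le)).trans
        (mul_le_mul_of_nonneg_left (mem_closedBall_iff_norm.1 hy) NNReal.zero_le_coe)) _)
  obtain ⟨T, hT0, hT1, hT⟩ := hf.exists_pos_forall_apply_mem_closedBall hr hM
  filter_upwards [Icc_mem_nhdsGE hT0] with h hh
  have hG : HasFDerivAt (fun z => f h z - z - h • A z)
      (fderiv ℝ (f h) p - ContinuousLinearMap.id ℝ E - h • A) p :=
    ((hdiff h).hasFDerivAt.sub (hasFDerivAt_id p)).sub (A.hasFDerivAt.const_smul h)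
  rw [← hG.fderiv]
  refine norm_fderiv_le_of_lip' ℝ (by have := hh.1; positivity) ?_
  filter_upwards [closedBall_mem_nhds p (half_pos hr)] with z hz
  have := hf.norm_sub_sub_sub_smul_apply_le hK hε0.le hFA hT1 (hT z hz)
    (hT p (mem_closedBall_self (half_pos hr).le)) h hh
  push_cast at this
  convert this using 1
  · congr 1; simp only [map_sub, smul_sub]; abel
  · ring

theorem hasDerivWithinAt_fderiv_Ici (hf : IsIntegralCurveFamily F f)
    (hF : HasStrictFDerivAt F A p) (hdiff : ∀ t, DifferentiableAt ℝ (f t) p) :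
    HasDerivWithinAt (fun h => fderiv ℝ (f h) p) A (Ici 0) 0 := by
  rw [hasDerivWithinAt_iff_isLittleO, Asymptotics.isLittleO_iff]
  intro c hc
  set L := Real.exp (‖A‖ + 1)
  have hL : L ≠ 0 := (Real.exp_pos _).ne'
  have hc' : 0 < c / (2 * L) := by positivity
  have hsmall : ∀ᶠ h in 𝓝[≥] (0 : ℝ), ‖A‖ * (‖A‖ + 1) * h ≤ c / (2 * L) :=
    ((continuous_const_mul _).tendsto' 0 0 (mul_zero _)).mono_left nhdsWithin_le_nhds
      |>.eventually_le_const hc'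
  filter_upwards [hf.eventually_norm_fderiv_sub_le hF hdiff (lt_min one_pos hc')
    (min_le_left _ _), hsmall, self_mem_nhdsWithin] with h hbound hAh (hh : 0 ≤ h)
  simp only [hf.fderiv_zero, sub_zero, Real.norm_of_nonneg hh]
  calc _ ≤ _ := hbound
    _ ≤ (c / (2 * L) + c / (2 * L)) * L * h := by gcongr; exact min_le_right _ _
    _ = c * h := by field_simp; ring

theorem hasDerivAt_fderiv (hf : IsIntegralCurveFamily F f) (hF : HasStrictFDerivAt F A p)
    (hdiff : ∀ t, DifferentiableAt ℝ (f t) p) :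
    HasDerivAt (fun h => fderiv ℝ (f h) p) A 0 := by
  have hleft := (hf.neg.hasDerivWithinAt_fderiv_Ici hF.neg fun t => hdiff (-t)).scomp_of_eq 0
    (hasDerivAt_neg 0).hasDerivWithinAt (fun t (ht : t ≤ 0) => neg_nonneg.2 ht) neg_zero.symm
  simp only [Function.comp_def, neg_neg, neg_smul, one_smul] at hleft
  rw [← hasDerivWithinAt_univ, ← Iic_union_Ici (a := (0 : ℝ))]
  exact hleft.union (hf.hasDerivWithinAt_fderiv_Ici hF hdiff)

theorem hasDerivAt_ring_inverse_fderiv [CompleteSpace E] (hf : IsIntegralCurveFamily F f)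
    (hF : HasStrictFDerivAt F A p) (hdiff : ∀ t, DifferentiableAt ℝ (f t) p) :
    HasDerivAt (fun h => Ring.inverse (fderiv ℝ (f h) p)) (-A) 0 := by
  have h := (hasFDerivAt_ringInverse (1 : (E →L[ℝ] E)ˣ)).comp_hasDerivAt_of_eq 0
    (hf.hasDerivAt_fderiv hF hdiff) (by rw [hf.fderiv_zero]; rfl)
  simp only [inv_one, Units.val_one, neg_apply, ContinuousLinearMap.mulLeftRight_apply, one_mul,
    mul_one] at h
  exact h

end IsIntegralCurveFamily

section GroupLaw

variable {f : ℝ → E → E}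

theorem fderiv_flow_neg_comp_fderiv_flow (hf0 : ∀ z, f 0 z = z)
    (hfadd : ∀ s t z, f (s + t) z = f s (f t z)) (hdiff : ∀ t, Differentiable ℝ (f t))
    (t : ℝ) (z : E) :
    (fderiv ℝ (f (-t)) (f t z)).comp (fderiv ℝ (f t) z) = ContinuousLinearMap.id ℝ E := by
  rw [← fderiv_comp z (hdiff _ _) (hdiff _ _),
    show f (-t) ∘ f t = id from funext (flow_neg_apply_flow hf0 hfadd t), fderiv_id]

theorem ring_inverse_fderiv_flow (hf0 : ∀ z, f 0 z = z)
    (hfadd : ∀ s t z, f (s + t) z = f s (f t z)) (hdiff : ∀ t, Differentiable ℝ (f t))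
    (t : ℝ) (z : E) :
    Ring.inverse (fderiv ℝ (f t) z) = fderiv ℝ (f (-t)) (f t z) := by
  have hright := fderiv_flow_neg_comp_fderiv_flow hf0 hfadd hdiff (-t) (f t z)
  rw [neg_neg, flow_neg_apply_flow hf0 hfadd] at hright
  exact Ring.inverse_unit ⟨_, _, hright, fderiv_flow_neg_comp_fderiv_flow hf0 hfadd hdiff t z⟩

theorem fderiv_flow_neg_add (hf0 : ∀ z, f 0 z = z)
    (hfadd : ∀ s t z, f (s + t) z = f s (f t z)) (hdiff : ∀ t, Differentiable ℝ (f t))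
    (t h : ℝ) (x : E) :
    fderiv ℝ (f (-(t + h))) (f (t + h) x) =
      (fderiv ℝ (f (-t)) (f t x)).comp (Ring.inverse (fderiv ℝ (f h) (f t x))) := by
  have hsplit : f (-(t + h)) = f (-t) ∘ f (-h) := funext fun z => by rw [neg_add, hfadd]; rfl
  rw [show f (t + h) x = f h (f t x) by rw [add_comm, hfadd], hsplit,
    fderiv_comp _ (hdiff _ _) (hdiff _ _), flow_neg_apply_flow hf0 hfadd,
    ring_inverse_fderiv_flow hf0 hfadd hdiff]

end GroupLaw

end Flow

/-- pairing of the adjoint covector with a vector field differentiates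
to the pairing with the Lie derivative `L_F X = ∇_F X − ∇_X F`.
Fix `x ∈ E`, `ν₀ : E →L[ℝ] ℝ`, set `ν t := ν₀ ∘ D(f (−t))(f t x)`, and let `X` be a
C¹ vector field.  Then `η t := ν t (X (f t x))` is differentiable with
`η'(t) = ν t (DX(f t x)(F (f t x)) − DF(f t x)(X (f t x)))` for all `t`. -/
theorem equivariant_divergence_stmt10
    {E : Type*} [NormedAddCommGroup E] [NormedSpace ℝ E] [FiniteDimensional ℝ E]
    (F : E → E) (hF : ContDiff ℝ 2 F)
    (f : ℝ → E → E)
    (hf0 : ∀ x : E, f 0 x = x)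
    (hfadd : ∀ s t : ℝ, ∀ x : E, f (s + t) x = f s (f t x))
    (hflow : ∀ t : ℝ, ∀ x : E, HasDerivAt (fun τ : ℝ => f τ x) (F (f t x)) t)
    (hfC2 : ∀ t : ℝ, ContDiff ℝ 2 (f t))
    (x : E) (ν₀ : E →L[ℝ] ℝ)
    (ν : ℝ → (E →L[ℝ] ℝ))
    (hν : ∀ t : ℝ, ν t = ν₀.comp (fderiv ℝ (f (-t)) (f t x)))
    (X : E → E) (hX : ContDiff ℝ 1 X)
    (η : ℝ → ℝ)
    (hη : ∀ t : ℝ, η t = ν t (X (f t x))) :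
    ∀ t : ℝ, HasDerivAt η
      (ν t (fderiv ℝ X (f t x) (F (f t x)) - fderiv ℝ F (f t x) (X (f t x)))) t := by
  intro t
  have hdiff : ∀ s, Differentiable ℝ (f s) := fun s => (hfC2 s).differentiable (by norm_num)
  have hf : IsIntegralCurveFamily F f := ⟨hf0, hflow⟩
  set p := f t x
  have hshift : (fun h => η (t + h)) =
      fun h => ν t (Ring.inverse (fderiv ℝ (f h) p) (X (f h p))) := funext fun h => by
    rw [hη, hν, hν, fderiv_flow_neg_add hf0 hfadd hdiff, show f (t + h) x = f h p by
      rw [add_comm, hfadd]]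
    rfl
  have hinv := hf.hasDerivAt_ring_inverse_fderiv
    (hF.contDiffAt.hasStrictFDerivAt (by norm_num)) fun s => hdiff s p
  have hXflow : HasDerivAt (fun h => X (f h p)) (fderiv ℝ X p (F p)) 0 :=
    (hX.differentiable one_ne_zero _).hasFDerivAt.comp_hasDerivAt_of_eq 0
      (by simpa [hf0] using hflow 0 p) (hf0 p).symm
  have hmain : HasDerivAt (fun h => η (t + h))
      (ν t (fderiv ℝ X p (F p) - fderiv ℝ F p (X p))) 0 := by
    rw [hshift]
    refine ((ν t).hasFDerivAt.comp_hasDerivAt 0 (hinv.clm_apply hXflow)).congr_deriv ?_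
    rw [hf0, hf.fderiv_zero, ← ContinuousLinearMap.one_def, Ring.inverse_one]
    simp [sub_eq_neg_add]
  have hshifted := HasDerivAt.comp_sub_const t t
    (by rwa [sub_self] : HasDerivAt (fun h => η (t + h)) _ (t - t))
  simpa using hshifted
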